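/- (Unbiasedness of the direct estimator.) Let z₁,…,z_n be i.i.d. random vectors in ℝ^q with mean zero, square-integrable entries, and covariance matrix C = (c_{ij}) satisfying C = A Σ Aᵀ + Γ for a binding matrix A satisfying UVC, a p×p symmetric matrix Σ = (σ_{lk}), and a diagonal matrix Γ. Define ĉ_{jk} = n^{-1} Σ_{i=1}^n z_{ij} z_{ik}, and define the direct estimator σ̂_{ll} = (|S_l|(|S_l|−1))^{-1} Σ_{i,j ∈ S_l, i≠j} ĉ_{ij} and σ̂_{lk} = (|S_l||S_k|)^{-1} Σ_{i ∈ S_l, j ∈ S_k} ĉ_{ij} for l ≠ k. Then E[σ̂_{lk}] = σ_{lk} for all l, k ∈ {1,…,p}. -/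

import Mathlib

open Matrix Finset MeasureTheory ProbabilityTheory

noncomputable section

open scoped Classical in
/-- The set of unique lower-level variables of the `l`-th higher-level variable:
indices `j` whose row of `A` equals the `l`-th standard basis vector. -/
noncomputable def uniqueSet {q p : ℕ} (A : Matrix (Fin q) (Fin p) ℝ) (l : Fin p) :
    Finset (Fin q) :=
  Finset.univ.filter fun j => ∀ k, A j k = if k = l then 1 else 0

/-! Every `ĉ_{ij}` with `i ∈ S_l`, `j ∈ S_k`, `i ≠ j` has expectation `c_{ij} = σ_{lk}`, because
`Γ` is diagonal and the rows `i`, `j` of `A` pick out row `l` and column `k` of `Σ`. The direct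
estimator averages exactly such entries, so its expectation is `σ_{lk}`. -/

section UniqueSet

variable {q p : ℕ} {A : Matrix (Fin q) (Fin p) ℝ} {l k : Fin p} {i j : Fin q}

theorem apply_eq_of_mem_uniqueSet (hi : i ∈ uniqueSet A l) (k : Fin p) :
    A i k = if k = l then 1 else 0 := by
  classical
  simp only [uniqueSet, mem_filter] at hi
  convert hi.2 k

theorem mul_apply_of_mem_uniqueSet {r : Type*} (M : Matrix (Fin p) r ℝ)
    (hi : i ∈ uniqueSet A l) (b : r) : (A * M) i b = M l b := by
  simp [mul_apply, apply_eq_of_mem_uniqueSet hi]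

theorem mul_transpose_apply_of_mem_uniqueSet {r : Type*} (M : Matrix r (Fin p) ℝ)
    (hj : j ∈ uniqueSet A k) (a : r) : (M * Aᵀ) a j = M a k := by
  simp [mul_apply, apply_eq_of_mem_uniqueSet hj]

theorem mul_mul_transpose_apply_of_mem_uniqueSet (Sig : Matrix (Fin p) (Fin p) ℝ)
    (hi : i ∈ uniqueSet A l) (hj : j ∈ uniqueSet A k) : (A * Sig * Aᵀ) i j = Sig l k := by
  rw [mul_transpose_apply_of_mem_uniqueSet _ hj, mul_apply_of_mem_uniqueSet _ hi]

theorem disjoint_uniqueSet (hlk : l ≠ k) : Disjoint (uniqueSet A l) (uniqueSet A k) := by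
  refine disjoint_left.2 fun i hil hik => ?_
  have h := apply_eq_of_mem_uniqueSet hik l
  rw [apply_eq_of_mem_uniqueSet hil l, if_pos rfl, if_neg hlk] at h
  exact one_ne_zero h

theorem covariance_apply_of_mem_uniqueSet {Sig : Matrix (Fin p) (Fin p) ℝ}
    {Γ : Matrix (Fin q) (Fin q) ℝ} (hΓ : Γ.IsDiag) (hi : i ∈ uniqueSet A l)
    (hj : j ∈ uniqueSet A k) (hij : i ≠ j) : (A * Sig * Aᵀ + Γ) i j = Sig l k := by
  rw [Matrix.add_apply, hΓ hij, add_zero, mul_mul_transpose_apply_of_mem_uniqueSet _ hi hj]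

end UniqueSet

section Expectation

variable {Ω : Type*} [MeasurableSpace Ω] {μ : Measure Ω}

theorem integral_sum_sum_of_integral_eq {α β : Type*} {s : Finset α} {t : α → Finset β}
    {F : α → β → Ω → ℝ} {c : ℝ} (hF : ∀ i ∈ s, ∀ j ∈ t i, Integrable (F i j) μ)
    (hc : ∀ i ∈ s, ∀ j ∈ t i, ∫ ω, F i j ω ∂μ = c) :
    ∫ ω, ∑ i ∈ s, ∑ j ∈ t i, F i j ω ∂μ = (∑ i ∈ s, ((t i).card : ℝ)) * c := by
  rw [integral_finsetSum _ fun i hi => integrable_finsetSum _ (hF i hi), sum_mul]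
  refine sum_congr rfl fun i hi => ?_
  rw [integral_finsetSum _ (hF i hi), sum_congr rfl (hc i hi), sum_const, nsmul_eq_mul]

variable {n q : ℕ} {z : Fin n → Ω → Fin q → ℝ}

theorem integrable_sampleCov (hL2 : ∀ m j, MemLp (fun ω => z m ω j) 2 μ) (i j : Fin q) :
    Integrable (fun ω => (n : ℝ)⁻¹ * ∑ m, z m ω i * z m ω j) μ :=
  (integrable_finsetSum _ fun m _ => (hL2 m i).integrable_mul (hL2 m j)).const_mul _

theorem integral_sampleCov (hn : n ≠ 0) {C : Matrix (Fin q) (Fin q) ℝ}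
    (hL2 : ∀ m j, MemLp (fun ω => z m ω j) 2 μ)
    (hcov : ∀ m i j, ∫ ω, z m ω i * z m ω j ∂μ = C i j) (i j : Fin q) :
    ∫ ω, (n : ℝ)⁻¹ * ∑ m, z m ω i * z m ω j ∂μ = C i j := by
  have hint (m : Fin n) : Integrable (fun ω => z m ω i * z m ω j) μ :=
    (hL2 m i).integrable_mul (hL2 m j)
  rw [integral_const_mul, integral_finsetSum _ fun m _ => hint m]
  simp_rw [hcov, sum_const, card_univ, Fintype.card_fin, nsmul_eq_mul]
  field_simp

end Expectation

theorem stmt5_general {Ω : Type*} [MeasurableSpace Ω] (μ : Measure Ω)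
    {q p n : ℕ} (hn : 0 < n)
    (A : Matrix (Fin q) (Fin p) ℝ)
    (hUVC : ∀ l, 2 ≤ (uniqueSet A l).card)
    (Sig : Matrix (Fin p) (Fin p) ℝ)
    (Γ : Matrix (Fin q) (Fin q) ℝ) (hΓ : Γ.IsDiag)
    (C : Matrix (Fin q) (Fin q) ℝ) (hC : C = A * Sig * Aᵀ + Γ)
    (z : Fin n → Ω → Fin q → ℝ)
    (hL2 : ∀ m j, MemLp (fun ω => z m ω j) 2 μ)
    (hcov : ∀ m i j, ∫ ω, z m ω i * z m ω j ∂μ = C i j) :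
    (∀ l : Fin p,
      ∫ ω, (((uniqueSet A l).card : ℝ) * (((uniqueSet A l).card : ℝ) - 1))⁻¹ *
        ∑ i ∈ uniqueSet A l, ∑ j ∈ (uniqueSet A l).erase i,
          ((n : ℝ)⁻¹ * ∑ m, z m ω i * z m ω j) ∂μ = Sig l l) ∧
    (∀ l k : Fin p, l ≠ k →
      ∫ ω, (((uniqueSet A l).card : ℝ) * ((uniqueSet A k).card : ℝ))⁻¹ *
        ∑ i ∈ uniqueSet A l, ∑ j ∈ uniqueSet A k,
          ((n : ℝ)⁻¹ * ∑ m, z m ω i * z m ω j) ∂μ = Sig l k) := by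
  have hcard (l : Fin p) :
      ((uniqueSet A l).card : ℝ) ≠ 0 ∧ ((uniqueSet A l).card : ℝ) - 1 ≠ 0 := by
    have : (2 : ℝ) ≤ (uniqueSet A l).card := by exact_mod_cast hUVC l
    constructor <;> linarith
  have hĉ (l k : Fin p) {i j : Fin q} (hi : i ∈ uniqueSet A l) (hj : j ∈ uniqueSet A k)
      (hij : i ≠ j) : ∫ ω, (n : ℝ)⁻¹ * ∑ m, z m ω i * z m ω j ∂μ = Sig l k := by
    rw [integral_sampleCov hn.ne' hL2 hcov, hC, covariance_apply_of_mem_uniqueSet hΓ hi hj hij]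
  constructor
  · intro l
    rw [integral_const_mul, integral_sum_sum_of_integral_eq (c := Sig l l)
      (fun i _ j _ => integrable_sampleCov hL2 i j)
      (fun i hi j hj => hĉ l l hi (mem_of_mem_erase hj) (ne_of_mem_erase hj).symm),
      sum_congr rfl fun i hi => by
        rw [card_erase_of_mem hi, Nat.cast_pred (card_pos.2 ⟨i, hi⟩)],
      sum_const, nsmul_eq_mul]
    field_simp [hcard l]
  · intro l k hlk
    rw [integral_const_mul, integral_sum_sum_of_integral_eq (c := Sig l k)
      (fun i _ j _ => integrable_sampleCov hL2 i j)
      (fun i hi j hj =>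
        hĉ l k hi hj (ne_of_mem_of_not_mem hi (disjoint_right.1 (disjoint_uniqueSet hlk) hj))),
      sum_const, nsmul_eq_mul]
    field_simp [(hcard l).1, (hcard k).1]

/-- unbiasedness of the direct estimator: for i.i.d. mean-zero,
square-integrable `z₁, …, z_n` with covariance `C = A Σ Aᵀ + Γ` (`A` a binding matrix
satisfying UVC, `Γ` diagonal), the direct estimators
`σ̂_{ll} = (|S_l|(|S_l|-1))⁻¹ ∑_{i,j ∈ S_l, i≠j} ĉ_{ij}` and
`σ̂_{lk} = (|S_l||S_k|)⁻¹ ∑_{i ∈ S_l, j ∈ S_k} ĉ_{ij}` (with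
`ĉ_{ij} = n⁻¹ ∑_m z_{mi} z_{mj}`) satisfy `E[σ̂_{lk}] = σ_{lk}` for all `l, k`. -/
theorem stmt5 {Ω : Type*} [MeasurableSpace Ω] (μ : Measure Ω) [IsProbabilityMeasure μ]
    {q p n : ℕ} (hn : 0 < n)
    (A : Matrix (Fin q) (Fin p) ℝ) (hA : ∀ j k, A j k = 0 ∨ A j k = 1)
    (hUVC : ∀ l, 2 ≤ (uniqueSet A l).card)
    (Sig : Matrix (Fin p) (Fin p) ℝ) (hSig : Sig.IsSymm)
    (Γ : Matrix (Fin q) (Fin q) ℝ) (hΓ : Γ.IsDiag)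
    (C : Matrix (Fin q) (Fin q) ℝ) (hC : C = A * Sig * Aᵀ + Γ)
    (z : Fin n → Ω → Fin q → ℝ)
    (hmeas : ∀ m, Measurable (z m))
    (hindep : iIndepFun z μ)
    (hident : ∀ m m', IdentDistrib (z m) (z m') μ μ)
    (hmean : ∀ m j, ∫ ω, z m ω j ∂μ = 0)
    (hL2 : ∀ m j, MemLp (fun ω => z m ω j) 2 μ)
    (hcov : ∀ m i j, ∫ ω, z m ω i * z m ω j ∂μ = C i j) :
    (∀ l : Fin p,
      ∫ ω, (((uniqueSet A l).card : ℝ) * (((uniqueSet A l).card : ℝ) - 1))⁻¹ *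
        ∑ i ∈ uniqueSet A l, ∑ j ∈ (uniqueSet A l).erase i,
          ((n : ℝ)⁻¹ * ∑ m, z m ω i * z m ω j) ∂μ = Sig l l) ∧
    (∀ l k : Fin p, l ≠ k →
      ∫ ω, (((uniqueSet A l).card : ℝ) * ((uniqueSet A k).card : ℝ))⁻¹ *
        ∑ i ∈ uniqueSet A l, ∑ j ∈ uniqueSet A k,
          ((n : ℝ)⁻¹ * ∑ m, z m ω i * z m ω j) ∂μ = Sig l k) :=
  stmt5_general μ hn A hUVC Sig Γ hΓ C hC z hL2 hcov
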